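/- arXiv:2308.02578 — 4 statements merged into one kernel-verified Lean document; each statement's English description precedes it below -/
import Mathlib

section
/- Let (Ω, μ) be a measure space and let f be a measurable function in L¹(μ) + L^∞(μ). Then f ∈ R₀ = { f : μ{|f| > λ} < ∞ for all λ > 0 } if and only if for every δ > 0 there exist g_δ ∈ L¹(μ) and h_δ ∈ L^∞(μ) with ‖h_δ‖_∞ ≤ δ and f = g_δ + h_δ. -/
open MeasureTheory

/-! Clamping `f` to `[-δ, δ]` splits it as `f = (f - clampAbs δ ∘ f) + clampAbs δ ∘ f`, the second
term of sup norm at most `δ`. The first vanishes off `{δ < |f|}`, a set of finite measure, and on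
it equals the `L¹` part of `f` plus a bounded function, so it is integrable. Conversely, if
`f = g + h` with `‖h‖_∞ ≤ l / 2`, then `{l < |f|}` lies a.e. in `{l / 2 ≤ |g|}`, which has finite
measure by Markov's inequality. -/

def clampAbs (δ x : ℝ) : ℝ := max (-δ) (min δ x)

lemma continuous_clampAbs (δ : ℝ) : Continuous (clampAbs δ) := by
  unfold clampAbs; fun_prop

lemma abs_clampAbs_le {δ : ℝ} (hδ : 0 ≤ δ) (x : ℝ) : |clampAbs δ x| ≤ δ :=
  abs_le.2 ⟨le_max_left _ _, max_le (by linarith) (min_le_left _ _)⟩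

lemma clampAbs_of_abs_le {δ x : ℝ} (hx : |x| ≤ δ) : clampAbs δ x = x := by
  rw [clampAbs, min_eq_right (abs_le.1 hx).2, max_eq_right (abs_le.1 hx).1]

section

variable {Ω : Type*} [MeasurableSpace Ω] {μ : Measure Ω}

lemma ae_norm_le_of_eLpNorm_top_le {E : Type*} [NormedAddCommGroup E] {h : Ω → E} {δ : ℝ}
    (hδ : 0 ≤ δ) (hh : eLpNorm h ⊤ μ ≤ ENNReal.ofReal δ) : ∀ᵐ t ∂μ, ‖h t‖ ≤ δ := by
  filter_upwards [ae_le_eLpNormEssSup (f := h) (μ := μ)] with t ht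
  rw [← eLpNorm_exponent_top] at ht
  rw [← ENNReal.ofReal_le_ofReal_iff hδ, ofReal_norm]
  exact ht.trans hh

lemma memLp_top_clampAbs_comp {f : Ω → ℝ} (hf : AEStronglyMeasurable f μ) {δ : ℝ} (hδ : 0 ≤ δ) :
    MemLp (clampAbs δ ∘ f) ⊤ μ :=
  memLp_top_of_bound ((continuous_clampAbs δ).comp_aestronglyMeasurable hf) δ
    (.of_forall fun t => abs_clampAbs_le hδ (f t))

lemma eLpNorm_top_clampAbs_comp_le (f : Ω → ℝ) {δ : ℝ} (hδ : 0 ≤ δ) :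
    eLpNorm (clampAbs δ ∘ f) ⊤ μ ≤ ENNReal.ofReal δ := by
  rw [eLpNorm_exponent_top]
  exact eLpNormEssSup_le_of_ae_bound (.of_forall fun t => abs_clampAbs_le hδ (f t))

lemma integrable_sub_clampAbs_comp_add {g h : Ω → ℝ} (hg : Integrable g μ) (hh : MemLp h ⊤ μ)
    {δ : ℝ} (hδ : 0 ≤ δ) (hfin : μ {t | δ < |g t + h t|} ≠ ⊤) :
    Integrable (g + h - clampAbs δ ∘ (g + h)) μ := by
  set S := {t | δ < |g t + h t|}
  have hsupp : Function.support (g + h - clampAbs δ ∘ (g + h)) ⊆ S := by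
    intro t ht
    by_contra hle
    exact ht (sub_eq_zero.2 (clampAbs_of_abs_le (not_lt.1 hle)).symm)
  have : IsFiniteMeasure (μ.restrict S) := isFiniteMeasure_restrict.2 hfin
  have hbdd : IntegrableOn (h - clampAbs δ ∘ (g + h)) S μ :=
    ((hh.sub (memLp_top_clampAbs_comp (hg.aestronglyMeasurable.add hh.1) hδ)).restrict S).integrable
      le_top
  rw [← integrableOn_iff_integrable_of_support_subset hsupp, add_sub_assoc]
  exact hg.integrableOn.add hbdd

lemma measure_lt_abs_add_lt_top {g h : Ω → ℝ} (hg : Integrable g μ) {δ l : ℝ} (hδ : 0 ≤ δ)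
    (hδl : δ < l) (hh : eLpNorm h ⊤ μ ≤ ENNReal.ofReal δ) : μ {t | l < |g t + h t|} < ⊤ := by
  refine (measure_mono_ae ?_).trans_lt (hg.measure_norm_ge_lt_top (sub_pos.2 hδl))
  filter_upwards [ae_norm_le_of_eLpNorm_top_le hδ hh] with t hht (hlt : l < |g t + h t|)
  show l - δ ≤ |g t|
  have := abs_add_le (g t) (h t)
  rw [Real.norm_eq_abs] at hht
  linarith

end

theorem fava_space_characterization_general
    {Ω : Type*} [MeasurableSpace Ω] (μ : Measure Ω)
    (f : Ω → ℝ)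
    (hL1Linf : ∃ g h : Ω → ℝ, Integrable g μ ∧ MemLp h ⊤ μ ∧ f = g + h) :
    (∀ l : ℝ, 0 < l → μ {t | l < |f t|} < ⊤) ↔
      (∀ δ : ℝ, 0 < δ → ∃ g h : Ω → ℝ, Integrable g μ ∧ MemLp h ⊤ μ ∧
        eLpNorm h ⊤ μ ≤ ENNReal.ofReal δ ∧ f = g + h) := by
  constructor
  · intro hdist δ hδ
    obtain ⟨g, h, hg, hh, rfl⟩ := hL1Linf
    exact ⟨_, _, integrable_sub_clampAbs_comp_add hg hh hδ.le (hdist δ hδ).ne,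
      memLp_top_clampAbs_comp (hg.aestronglyMeasurable.add hh.1) hδ.le,
      eLpNorm_top_clampAbs_comp_le _ hδ.le, (sub_add_cancel _ _).symm⟩
  · intro hdec l hl
    obtain ⟨g, h, hg, -, hh, rfl⟩ := hdec (l / 2) (half_pos hl)
    exact measure_lt_abs_add_lt_top hg (half_pos hl).le (half_lt_self hl) hh

/-- A function `f ∈ L¹ + L^∞` has all its distribution values `μ{|f| > λ}` finite
(`λ > 0`) if and only if for every `δ > 0` it decomposes as `f = g + h` with `g`
integrable and `‖h‖_∞ ≤ δ`. -/
theorem fava_space_characterization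
    {Ω : Type*} [MeasurableSpace Ω] (μ : Measure Ω)
    (f : Ω → ℝ) (hmeas : Measurable f)
    (hL1Linf : ∃ g h : Ω → ℝ, Integrable g μ ∧ MemLp h ⊤ μ ∧ f = g + h) :
    (∀ l : ℝ, 0 < l → μ {t | l < |f t|} < ⊤) ↔
      (∀ δ : ℝ, 0 < δ → ∃ g h : Ω → ℝ, Integrable g μ ∧ MemLp h ⊤ μ ∧
        eLpNorm h ⊤ μ ≤ ENNReal.ofReal δ ∧ f = g + h) :=
  fava_space_characterization_general μ f hL1Linf
end

section
/- Let (Ω, μ) be a σ-finite measure space and let A : L¹(μ) + L^∞(μ) → L¹(μ) + L^∞(μ) be a linear Dunford–Schwartz operator: A(L¹) ⊆ L¹ with ‖A f‖₁ ≤ ‖f‖₁, and A(L^∞) ⊆ L^∞ with ‖A f‖_∞ ≤ ‖f‖_∞. Then for every f ∈ L¹ + L^∞ and every s > 0, ∫₀ˢ μ_t(A f) dt ≤ ∫₀ˢ μ_t(f) dt, where μ_t denotes the non-increasing rearrangement. -/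
open MeasureTheory

/-- A function lies in `L¹ + L^∞`. -/
def InL1PlusLinf {Ω : Type*} [MeasurableSpace Ω] (μ : Measure Ω) (f : Ω → ℝ) : Prop :=
  ∃ g h : Ω → ℝ, Integrable g μ ∧ MemLp h ⊤ μ ∧ f = g + h

/-- The non-increasing rearrangement of `f`. -/
noncomputable def rearrangement {Ω : Type*} [MeasurableSpace Ω] (μ : Measure Ω)
    (f : Ω → ℝ) (t : ℝ) : ℝ :=
  sInf {l : ℝ | 0 < l ∧ μ {x | l < |f x|} ≤ ENNReal.ofReal t}

/-!
Truncating `f` at height `c = μ_s(f)`, i.e. `h = max (min f c) (-c)` and `g = f - h`, attains the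
K-functional: `‖g‖₁ + s‖h‖_∞ ≤ ∫₀ˢ μ_t(f) dt`. This is the layer-cake formula, since
`|g| = (|f| - c)⁺` and `μ{|f| > c + u}` is at most the length of `{t ∈ (0, s] | μ_t(f) > c + u}`.
Conversely, for any splitting `F = g + h` we have `μ_t(F) ≤ μ_t(g) + ‖h‖_∞` and
`∫₀^∞ μ_t(g) dt ≤ ‖g‖₁`, so `∫₀ˢ μ_t(F) dt ≤ ‖g‖₁ + s‖h‖_∞`. Applying this to
`A f = A g + A h` for the optimal splitting of `f`, and then the contractivity of `A`, gives the
claim.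
-/

open Set
open scoped ENNReal

section Rearrangement

variable {Ω : Type*} [MeasurableSpace Ω] {μ : Measure Ω} {f g h : Ω → ℝ} {s t l : ℝ}

lemma measure_lt_le_of_forall_lt {φ : Ω → ℝ} {r : ℝ≥0∞}
    (h : ∀ l', l < l' → μ {x | l' < φ x} ≤ r) : μ {x | l < φ x} ≤ r := by
  have hmono : Monotone fun n : ℕ => {x | l + 1 / (n + 1 : ℝ) < φ x} := by
    intro m n hmn x (hx : l + 1 / ((m : ℝ) + 1) < φ x)
    exact (add_le_add le_rfl (Nat.one_div_le_one_div hmn)).trans_lt hx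
  have hunion : {x | l < φ x} = ⋃ n : ℕ, {x | l + 1 / (n + 1 : ℝ) < φ x} := by
    ext x
    simp only [mem_ofPred_eq, mem_iUnion]
    refine ⟨fun hx => ?_, fun ⟨n, hn⟩ => (lt_add_of_pos_right l Nat.one_div_pos_of_nat).trans hn⟩
    obtain ⟨n, hn⟩ := exists_nat_one_div_lt (sub_pos.mpr hx)
    exact ⟨n, by linarith⟩
  rw [hunion, hmono.measure_iUnion]
  exact iSup_le fun n => h _ (lt_add_of_pos_right l Nat.one_div_pos_of_nat)

/-- This set may be empty (e.g. for `f ∉ L¹ + L^∞`), and then `rearrangement μ f t = sInf ∅ = 0`;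
hence the nonemptiness hypotheses below. -/
def rearrangementLevels (μ : Measure Ω) (f : Ω → ℝ) (t : ℝ) : Set ℝ :=
  {l : ℝ | 0 < l ∧ μ {x | l < |f x|} ≤ ENNReal.ofReal t}

lemma rearrangementLevels_bddBelow : BddBelow (rearrangementLevels μ f t) :=
  ⟨0, fun _ hl => hl.1.le⟩

lemma mem_rearrangementLevels_of_le {l' : ℝ} (hl : l ∈ rearrangementLevels μ f t)
    (hll' : l ≤ l') : l' ∈ rearrangementLevels μ f t :=
  ⟨hl.1.trans_le hll', (measure_mono fun _ hx => hll'.trans_lt hx).trans hl.2⟩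

lemma rearrangementLevels_mono {t' : ℝ} (htt' : t ≤ t') :
    rearrangementLevels μ f t ⊆ rearrangementLevels μ f t' :=
  fun _ hl => ⟨hl.1, hl.2.trans (ENNReal.ofReal_le_ofReal htt')⟩

lemma rearrangement_nonneg : 0 ≤ rearrangement μ f t :=
  Real.sInf_nonneg fun _ hl => hl.1.le

lemma rearrangement_le_of_mem (hl : l ∈ rearrangementLevels μ f t) : rearrangement μ f t ≤ l :=
  csInf_le rearrangementLevels_bddBelow hl

lemma le_rearrangement_of_ofReal_lt (hne : (rearrangementLevels μ f t).Nonempty)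
    (ht : ENNReal.ofReal t < μ {x | l < |f x|}) : l ≤ rearrangement μ f t :=
  le_csInf hne fun _ hl' => le_of_not_gt fun hl'l =>
    (mem_rearrangementLevels_of_le hl' hl'l.le).2.not_gt ht

lemma measure_rearrangement_lt_abs_le (hne : (rearrangementLevels μ f t).Nonempty) :
    μ {x | rearrangement μ f t < |f x|} ≤ ENNReal.ofReal t :=
  measure_lt_le_of_forall_lt fun _ hl' =>
    let ⟨_, hl, hll'⟩ := exists_lt_of_csInf_lt hne hl'
    (mem_rearrangementLevels_of_le hl hll'.le).2

lemma rearrangement_antitoneOn (hne : ∀ t, 0 < t → (rearrangementLevels μ f t).Nonempty) :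
    AntitoneOn (rearrangement μ f) (Ioi 0) :=
  fun t ht _ _ htt' =>
    csInf_le_csInf rearrangementLevels_bddBelow (hne t ht) (rearrangementLevels_mono htt')

lemma add_mem_rearrangementLevels_add {B : ℝ} (hl : l ∈ rearrangementLevels μ g t)
    (hB : 0 ≤ B) (hh : ∀ᵐ x ∂μ, |h x| ≤ B) : l + B ∈ rearrangementLevels μ (g + h) t := by
  refine ⟨by linarith [hl.1], le_trans (measure_mono_ae ?_) hl.2⟩
  filter_upwards [hh] with x hx (hlt : l + B < |g x + h x|)
  exact lt_of_not_ge fun hg => hlt.not_ge ((abs_add_le _ _).trans (add_le_add hg hx))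

lemma rearrangement_add_le {B : ℝ} (hne : (rearrangementLevels μ g t).Nonempty) (hB : 0 ≤ B)
    (hh : ∀ᵐ x ∂μ, |h x| ≤ B) : rearrangement μ (g + h) t ≤ rearrangement μ g t + B :=
  sub_le_iff_le_add.mp <| le_csInf hne fun _ hl =>
    sub_le_iff_le_add.mpr (rearrangement_le_of_mem (add_mem_rearrangementLevels_add hl hB hh))

lemma rearrangementLevels_nonempty_of_integrable (hg : Integrable g μ) (ht : 0 < t) :
    (rearrangementLevels μ g t).Nonempty := by
  set L := ∫⁻ x, ‖g x‖ₑ ∂μ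
  have hL : L ≠ ∞ := hg.2.ne
  set a := L.toReal / t + 1
  have ha : 0 < a := by positivity
  refine ⟨a, ha, ?_⟩
  calc μ {x | a < |g x|} ≤ μ {x | ENNReal.ofReal a ≤ ‖g x‖ₑ} := measure_mono fun x hx => by
        rw [mem_ofPred_eq, Real.enorm_eq_ofReal_abs]; exact ENNReal.ofReal_le_ofReal hx.le
    _ ≤ L / ENNReal.ofReal a :=
        meas_ge_le_lintegral_div hg.1.enorm (ENNReal.ofReal_pos.mpr ha).ne' ENNReal.ofReal_ne_top
    _ ≤ ENNReal.ofReal t := by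
        rw [ENNReal.div_le_iff_le_mul (Or.inl (ENNReal.ofReal_pos.mpr ha).ne')
          (Or.inl ENNReal.ofReal_ne_top), ← ENNReal.ofReal_mul ht.le, ← ENNReal.ofReal_toReal hL]
        refine ENNReal.ofReal_le_ofReal ?_
        rw [mul_add, mul_div_cancel₀ _ ht.ne']
        linarith

lemma MeasureTheory.MemLp.ae_abs_le_lpNorm_top (hh : MemLp h ∞ μ) :
    ∀ᵐ x ∂μ, |h x| ≤ lpNorm h ∞ μ := by
  simpa only [Real.norm_eq_abs] using ae_le_lpNorm_exponent_top hh

lemma InL1PlusLinf.aestronglyMeasurable (hf : InL1PlusLinf μ f) : AEStronglyMeasurable f μ := by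
  obtain ⟨g, h, hg, hh, rfl⟩ := hf
  exact hg.1.add hh.1

lemma InL1PlusLinf.rearrangementLevels_nonempty (hf : InL1PlusLinf μ f) (ht : 0 < t) :
    (rearrangementLevels μ f t).Nonempty := by
  obtain ⟨g, h, hg, hh, rfl⟩ := hf
  obtain ⟨l, hl⟩ := rearrangementLevels_nonempty_of_integrable hg ht
  exact ⟨_, add_mem_rearrangementLevels_add hl lpNorm_nonneg hh.ae_abs_le_lpNorm_top⟩

lemma InL1PlusLinf.aemeasurable_rearrangement (hf : InL1PlusLinf μ f) :
    AEMeasurable (rearrangement μ f) (volume.restrict (Ioc 0 s)) :=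
  aemeasurable_restrict_of_antitoneOn measurableSet_Ioc
    ((rearrangement_antitoneOn fun _ => hf.rearrangementLevels_nonempty).mono Ioc_subset_Ioi_self)

lemma volume_lt_rearrangement_le {u : ℝ} (hu : 0 < u) :
    volume ({t | u < rearrangement μ g t} ∩ Ioi 0) ≤ μ {x | u < |g x|} := by
  rcases eq_or_ne (μ {x | u < |g x|}) ∞ with hD | hD
  · exact hD ▸ le_top
  calc volume ({t | u < rearrangement μ g t} ∩ Ioi 0)
      ≤ volume (Ioc 0 (μ {x | u < |g x|}).toReal) := by
        refine measure_mono fun t ⟨(htu : u < _), (ht : 0 < t)⟩ => ⟨ht, le_of_not_gt fun hDt =>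
          htu.not_ge (rearrangement_le_of_mem ⟨hu, ?_⟩)⟩
        exact (ENNReal.le_ofReal_iff_toReal_le hD ht.le).2 hDt.le
    _ = μ {x | u < |g x|} := by rw [Real.volume_Ioc, sub_zero, ENNReal.ofReal_toReal hD]

lemma lintegral_rearrangement_le_eLpNorm_one (hg : Integrable g μ) :
    ∫⁻ t in Ioi 0, ENNReal.ofReal (rearrangement μ g t) ≤ eLpNorm g 1 μ := by
  have hmeas : AEMeasurable (rearrangement μ g) (volume.restrict (Ioi 0)) :=
    aemeasurable_restrict_of_antitoneOn measurableSet_Ioi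
      (rearrangement_antitoneOn fun _ => rearrangementLevels_nonempty_of_integrable hg)
  calc ∫⁻ t in Ioi 0, ENNReal.ofReal (rearrangement μ g t)
      = ∫⁻ u in Ioi 0, volume.restrict (Ioi 0) {t | u < rearrangement μ g t} :=
        lintegral_eq_lintegral_meas_lt _ (ae_of_all _ fun _ => rearrangement_nonneg) hmeas
    _ ≤ ∫⁻ u in Ioi 0, μ {x | u < |g x|} := setLIntegral_mono' measurableSet_Ioi fun u hu => by
        rw [Measure.restrict_apply' measurableSet_Ioi]
        exact volume_lt_rearrangement_le hu
    _ = ∫⁻ x, ENNReal.ofReal |g x| ∂μ :=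
        (lintegral_eq_lintegral_meas_lt _ (ae_of_all _ fun x => abs_nonneg (g x))
          hg.1.aemeasurable.abs).symm
    _ = eLpNorm g 1 μ := by
        simp only [eLpNorm_one_eq_lintegral_enorm, Real.enorm_eq_ofReal_abs]

lemma lintegral_rearrangement_add_le (hg : Integrable g μ) (hh : MemLp h ∞ μ) (s : ℝ) :
    ∫⁻ t in Ioc 0 s, ENNReal.ofReal (rearrangement μ (g + h) t) ≤
      eLpNorm g 1 μ + ENNReal.ofReal s * eLpNorm h ∞ μ := by
  have hB : ENNReal.ofReal (lpNorm h ∞ μ) ≤ eLpNorm h ∞ μ := by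
    rw [← toReal_eLpNorm hh.1]
    exact ENNReal.ofReal_toReal_le
  calc ∫⁻ t in Ioc 0 s, ENNReal.ofReal (rearrangement μ (g + h) t)
      ≤ ∫⁻ t in Ioc 0 s, (ENNReal.ofReal (rearrangement μ g t) + ENNReal.ofReal (lpNorm h ∞ μ)) :=
        setLIntegral_mono' measurableSet_Ioc fun t ht => by
          rw [← ENNReal.ofReal_add rearrangement_nonneg lpNorm_nonneg]
          exact ENNReal.ofReal_le_ofReal <| rearrangement_add_le
            (rearrangementLevels_nonempty_of_integrable hg ht.1) lpNorm_nonneg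
            hh.ae_abs_le_lpNorm_top
    _ = (∫⁻ t in Ioc 0 s, ENNReal.ofReal (rearrangement μ g t)) +
          ENNReal.ofReal s * ENNReal.ofReal (lpNorm h ∞ μ) := by
        rw [lintegral_add_right _ measurable_const, setLIntegral_const, Real.volume_Ioc, sub_zero,
          mul_comm]
    _ ≤ eLpNorm g 1 μ + ENNReal.ofReal s * eLpNorm h ∞ μ := by
        gcongr
        exact (lintegral_mono_set Ioc_subset_Ioi_self).trans
          (lintegral_rearrangement_le_eLpNorm_one hg)

lemma InL1PlusLinf.lintegral_rearrangement_lt_top (hf : InL1PlusLinf μ f) (s : ℝ) :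
    ∫⁻ t in Ioc 0 s, ENNReal.ofReal (rearrangement μ f t) < ∞ := by
  obtain ⟨g, h, hg, hh, rfl⟩ := hf
  refine (lintegral_rearrangement_add_le hg hh s).trans_lt ?_
  exact ENNReal.add_lt_top.mpr ⟨(memLp_one_iff_integrable.mpr hg).2,
    ENNReal.mul_lt_top ENNReal.ofReal_lt_top hh.2⟩

lemma InL1PlusLinf.integral_rearrangement_eq (hf : InL1PlusLinf μ f) (s : ℝ) :
    ∫ t in Ioc 0 s, rearrangement μ f t =
      (∫⁻ t in Ioc 0 s, ENNReal.ofReal (rearrangement μ f t)).toReal :=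
  integral_eq_lintegral_of_nonneg_ae (ae_of_all _ fun _ => rearrangement_nonneg)
    hf.aemeasurable_rearrangement.aestronglyMeasurable

lemma abs_sub_max_min_neg {x c : ℝ} (hc : 0 ≤ c) : |x - max (min x c) (-c)| = max (|x| - c) 0 := by
  rcases le_total c x with h1 | h1
  · rw [min_eq_right h1, max_eq_left (by linarith), abs_of_nonneg (by linarith),
      abs_of_nonneg (by linarith), max_eq_left (by linarith)]
  rcases le_total (-c) x with h2 | h2
  · rw [min_eq_left h1, max_eq_left h2, sub_self, abs_zero, max_eq_right]
    exact sub_nonpos.mpr (abs_le.mpr ⟨h2, h1⟩)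
  · rw [min_eq_left h1, max_eq_right h2, abs_of_nonpos (by linarith), abs_of_nonpos (by linarith),
      max_eq_left (by linarith)]
    ring

lemma eLpNorm_sub_max_min_neg_eq (hf : AEStronglyMeasurable f μ) {c : ℝ} (hc : 0 ≤ c) :
    eLpNorm (fun x => f x - max (min (f x) c) (-c)) 1 μ =
      ∫⁻ u in Ioi 0, μ {x | c + u < |f x|} := by
  simp only [eLpNorm_one_eq_lintegral_enorm, Real.enorm_eq_ofReal_abs, abs_sub_max_min_neg hc]
  rw [lintegral_eq_lintegral_meas_lt (f := fun x => max (|f x| - c) 0) _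
    (ae_of_all _ fun _ => le_max_right _ _)
    ((hf.aemeasurable.abs.sub_const c).max aemeasurable_const)]
  refine setLIntegral_congr_fun measurableSet_Ioi fun u (hu : 0 < u) => ?_
  simp only [lt_max_iff, lt_sub_iff_add_lt', hu.not_gt, or_false]

lemma measure_add_lt_abs_le_volume (hf : InL1PlusLinf μ f) {c u : ℝ} (hu : 0 ≤ u) (hs : 0 ≤ s)
    (hcs : μ {x | c < |f x|} ≤ ENNReal.ofReal s) :
    μ {x | c + u < |f x|} ≤ volume ({t | u < rearrangement μ f t - c} ∩ Ioc 0 s) := by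
  refine measure_lt_le_of_forall_lt fun l hl => ?_
  have hDs : μ {x | l < |f x|} ≤ ENNReal.ofReal s :=
    (measure_mono fun x (hx : l < |f x|) => (by linarith : c < l).trans hx).trans hcs
  have hD : μ {x | l < |f x|} ≠ ∞ := ne_top_of_le_ne_top ENNReal.ofReal_ne_top hDs
  calc μ {x | l < |f x|} = volume (Ioo 0 (μ {x | l < |f x|}).toReal) := by
        rw [Real.volume_Ioo, sub_zero, ENNReal.ofReal_toReal hD]
    _ ≤ _ := by
        refine measure_mono fun t ⟨ht, htD⟩ =>
          ⟨?_, ht, htD.le.trans (ENNReal.toReal_le_of_le_ofReal hs hDs)⟩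
        have := le_rearrangement_of_ofReal_lt (hf.rearrangementLevels_nonempty ht)
          ((ENNReal.ofReal_lt_iff_lt_toReal ht.le hD).2 htD)
        show u < rearrangement μ f t - c
        linarith

lemma InL1PlusLinf.rearrangement_le_of_le (hf : InL1PlusLinf μ f) (ht : 0 < t) (hts : t ≤ s) :
    rearrangement μ f s ≤ rearrangement μ f t :=
  rearrangement_antitoneOn (fun _ => hf.rearrangementLevels_nonempty) ht (ht.trans_le hts) hts

lemma InL1PlusLinf.eLpNorm_sub_max_min_neg_le (hf : InL1PlusLinf μ f) (hs : 0 < s) :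
    eLpNorm (fun x => f x - max (min (f x) (rearrangement μ f s)) (-rearrangement μ f s)) 1 μ ≤
      ∫⁻ t in Ioc 0 s, ENNReal.ofReal (rearrangement μ f t - rearrangement μ f s) := by
  rw [eLpNorm_sub_max_min_neg_eq hf.aestronglyMeasurable rearrangement_nonneg,
    lintegral_eq_lintegral_meas_lt _ ?_ (hf.aemeasurable_rearrangement.sub_const _)]
  · refine setLIntegral_mono' measurableSet_Ioi fun u (hu : 0 < u) => ?_
    rw [Measure.restrict_apply' measurableSet_Ioc]
    exact measure_add_lt_abs_le_volume hf hu.le hs.le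
      (measure_rearrangement_lt_abs_le (hf.rearrangementLevels_nonempty hs))
  · filter_upwards [ae_restrict_mem measurableSet_Ioc] with t ht
    exact sub_nonneg.mpr (hf.rearrangement_le_of_le ht.1 ht.2)

lemma InL1PlusLinf.lintegral_rearrangement_eq_add (hf : InL1PlusLinf μ f) :
    ∫⁻ t in Ioc 0 s, ENNReal.ofReal (rearrangement μ f t) =
      (∫⁻ t in Ioc 0 s, ENNReal.ofReal (rearrangement μ f t - rearrangement μ f s)) +
        ENNReal.ofReal s * ENNReal.ofReal (rearrangement μ f s) := by
  have hconst : ENNReal.ofReal s * ENNReal.ofReal (rearrangement μ f s) =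
      ∫⁻ _ in Ioc 0 s, ENNReal.ofReal (rearrangement μ f s) := by
    rw [setLIntegral_const, Real.volume_Ioc, sub_zero, mul_comm]
  rw [hconst, ← lintegral_add_right _ measurable_const]
  refine setLIntegral_congr_fun measurableSet_Ioc fun t ht => ?_
  rw [← ENNReal.ofReal_add (sub_nonneg.mpr (hf.rearrangement_le_of_le ht.1 ht.2))
    rearrangement_nonneg, sub_add_cancel]

lemma InL1PlusLinf.exists_decomposition_le (hf : InL1PlusLinf μ f) (hs : 0 < s) :
    ∃ g h, Integrable g μ ∧ MemLp h ∞ μ ∧ f = g + h ∧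
      eLpNorm g 1 μ + ENNReal.ofReal s * eLpNorm h ∞ μ ≤
        ∫⁻ t in Ioc 0 s, ENNReal.ofReal (rearrangement μ f t) := by
  set c := rearrangement μ f s
  have hc : 0 ≤ c := rearrangement_nonneg
  set h : Ω → ℝ := fun x => max (min (f x) c) (-c)
  have hh_le : ∀ x, ‖h x‖ ≤ c := fun x => by
    rw [Real.norm_eq_abs, abs_le]
    exact ⟨le_max_right _ _, max_le (min_le_right _ _) (by linarith)⟩
  have hhm : AEStronglyMeasurable h μ :=
    ((hf.aestronglyMeasurable.aemeasurable.min aemeasurable_const).max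
      aemeasurable_const).aestronglyMeasurable
  have hK : eLpNorm (f - h) 1 μ + ENNReal.ofReal s * eLpNorm h ∞ μ ≤
      ∫⁻ t in Ioc 0 s, ENNReal.ofReal (rearrangement μ f t) := by
    rw [hf.lintegral_rearrangement_eq_add]
    gcongr
    · exact hf.eLpNorm_sub_max_min_neg_le hs
    · exact eLpNorm_exponent_top.trans_le (eLpNormEssSup_le_of_ae_bound (ae_of_all _ hh_le))
  have hg : Integrable (f - h) μ := memLp_one_iff_integrable.mp
    ⟨hf.aestronglyMeasurable.sub hhm,
      (le_add_right le_rfl).trans_lt (hK.trans_lt (hf.lintegral_rearrangement_lt_top s))⟩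
  exact ⟨f - h, h, hg, memLp_top_of_bound hhm c (ae_of_all _ hh_le), (sub_add_cancel f h).symm,
    hK⟩

end Rearrangement

theorem dunford_schwartz_submajorization_general
    {Ω : Type*} [MeasurableSpace Ω] (μ : Measure Ω)
    (A : (Ω → ℝ) → (Ω → ℝ))
    (hadd : ∀ f g : Ω → ℝ, InL1PlusLinf μ f → InL1PlusLinf μ g →
      A (f + g) = A f + A g)
    (hL1 : ∀ g : Ω → ℝ, Integrable g μ → Integrable (A g) μ ∧
      eLpNorm (A g) 1 μ ≤ eLpNorm g 1 μ)
    (hLinf : ∀ h : Ω → ℝ, MemLp h ⊤ μ → MemLp (A h) ⊤ μ ∧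
      eLpNorm (A h) ⊤ μ ≤ eLpNorm h ⊤ μ)
    (f : Ω → ℝ) (hf : InL1PlusLinf μ f) (s : ℝ) (hs : 0 < s) :
    ∫ t in Set.Ioc (0 : ℝ) s, rearrangement μ (A f) t ≤
      ∫ t in Set.Ioc (0 : ℝ) s, rearrangement μ f t := by
  obtain ⟨g, h, hg, hh, rfl, hK⟩ := hf.exists_decomposition_le hs
  obtain ⟨hAg, hAg_le⟩ := hL1 g hg
  obtain ⟨hAh, hAh_le⟩ := hLinf h hh
  have hA : A (g + h) = A g + A h :=
    hadd g h ⟨g, 0, hg, .zero, (add_zero g).symm⟩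
      ⟨0, h, integrable_zero _ _ _, hh, (zero_add h).symm⟩
  have hAf : InL1PlusLinf μ (A (g + h)) := ⟨A g, A h, hAg, hAh, hA⟩
  rw [hAf.integral_rearrangement_eq, hf.integral_rearrangement_eq]
  refine ENNReal.toReal_mono (hf.lintegral_rearrangement_lt_top s).ne ?_
  calc ∫⁻ t in Set.Ioc 0 s, ENNReal.ofReal (rearrangement μ (A (g + h)) t)
      ≤ eLpNorm (A g) 1 μ + ENNReal.ofReal s * eLpNorm (A h) ⊤ μ :=
        hA ▸ lintegral_rearrangement_add_le hAg hAh s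
    _ ≤ eLpNorm g 1 μ + ENNReal.ofReal s * eLpNorm h ⊤ μ := by gcongr
    _ ≤ ∫⁻ t in Set.Ioc 0 s, ENNReal.ofReal (rearrangement μ (g + h) t) := hK

/-- A Dunford–Schwartz operator is submajorization-decreasing: `A f ≺≺ f`. -/
theorem dunford_schwartz_submajorization
    {Ω : Type*} [MeasurableSpace Ω] (μ : Measure Ω) [SigmaFinite μ]
    (A : (Ω → ℝ) → (Ω → ℝ))
    (hadd : ∀ f g : Ω → ℝ, InL1PlusLinf μ f → InL1PlusLinf μ g →
      A (f + g) = A f + A g)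
    (hsmul : ∀ (c : ℝ) (f : Ω → ℝ), InL1PlusLinf μ f → A (c • f) = c • A f)
    (hL1 : ∀ g : Ω → ℝ, Integrable g μ → Integrable (A g) μ ∧
      eLpNorm (A g) 1 μ ≤ eLpNorm g 1 μ)
    (hLinf : ∀ h : Ω → ℝ, MemLp h ⊤ μ → MemLp (A h) ⊤ μ ∧
      eLpNorm (A h) ⊤ μ ≤ eLpNorm h ⊤ μ)
    (f : Ω → ℝ) (hf : InL1PlusLinf μ f) (s : ℝ) (hs : 0 < s) :
    ∫ t in Set.Ioc (0 : ℝ) s, rearrangement μ (A f) t ≤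
      ∫ t in Set.Ioc (0 : ℝ) s, rearrangement μ f t :=
  dunford_schwartz_submajorization_general μ A hadd hL1 hLinf f hf s hs
end

section
/- Define f_n : (0, ∞) → ℝ by f_n(t) = Σ_{k=1}^{n} 2^k · 1_{(2^{-k}, 2^{-k+1}]}(t). Then each f_n is Lebesgue integrable on (0, ∞), the sequence {f_n} converges almost uniformly (with respect to Lebesgue measure) to the function f(t) = Σ_{k=1}^{∞} 2^k · 1_{(2^{-k}, 2^{-k+1}]}(t), the limit f satisfies ν{f > λ} < ∞ for every λ > 0 (so f belongs to Fava's space R₀), but f is not Lebesgue integrable. -/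
/-!
Each layer `2^k χ_{(2^{-k}, 2^{-k+1}]}` has integral `1`, so `∫ f_n = n` and the pointwise
limit `f` dominates functions of arbitrarily large integral. On the other hand `f_n = f` on
`(2^{-n}, ∞)`, whose complement in `(0, ∞)` has measure `2^{-n}`, which gives almost uniform
convergence; and `f` vanishes outside `(0, 1]`, so every superlevel set `{f > λ}`, `λ > 0`,
has finite measure.
-/

open MeasureTheory Filter

/-- The `k`-th layer `2^k · χ_{(2^{-k}, 2^{-k+1}]}`. -/
noncomputable def layer (k : ℕ) : ℝ → ℝ :=
  Set.indicator (Set.Ioc ((2:ℝ) ^ (-(k:ℤ))) ((2:ℝ) ^ (1 - (k:ℤ)))) (fun _ => (2:ℝ) ^ k)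

open Set

theorem tendstoUniformlyOn_of_eventually_eqOn {ι α β : Type*} [UniformSpace β] {l : Filter ι}
    {F : ι → α → β} {f : α → β} {s : Set α} (h : ∀ᶠ n in l, EqOn (F n) f s) :
    TendstoUniformlyOn F f l s := fun _ hu =>
  h.mono fun _ hn _ hx => (hn hx).symm ▸ refl_mem_uniformity hu

theorem not_integrable_of_tendsto_integral_of_le {ι α : Type*} [MeasurableSpace α]
    {μ : Measure α} {l : Filter ι} [l.NeBot] {f : α → ℝ} {g : ι → α → ℝ}
    (hg : ∀ i, Integrable (g i) μ) (hgf : ∀ i, g i ≤ᵐ[μ] f)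
    (hlim : Tendsto (fun i => ∫ x, g i x ∂μ) l atTop) : ¬ Integrable f μ := fun hf =>
  let ⟨i, hi⟩ := (hlim.eventually_gt_atTop (∫ x, f x ∂μ)).exists
  (integral_mono_ae (hg i) hf (hgf i)).not_gt hi

theorem exists_two_zpow_neg_lt {t : ℝ} (ht : 0 < t) : ∃ n : ℕ, (2:ℝ) ^ (-(n:ℤ)) < t := by
  obtain ⟨n, hn⟩ := exists_pow_lt_of_lt_one ht (by norm_num : (2⁻¹:ℝ) < 1)
  exact ⟨n, by rwa [zpow_neg, zpow_natCast, ← inv_pow]⟩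

theorem volume_restrict_Ioi_compl_Ioi (x : ℝ) :
    volume.restrict (Ioi 0) (Ioi x)ᶜ = ENNReal.ofReal x := by
  rw [compl_Ioi, Measure.restrict_apply measurableSet_Iic, Iic_inter_Ioi, Real.volume_Ioc,
    sub_zero]

theorem layer_nonneg (k : ℕ) (t : ℝ) : 0 ≤ layer k t :=
  indicator_nonneg (fun _ _ => by positivity) t

theorem layer_eq_zero_of_nonpos (k : ℕ) {t : ℝ} (ht : t ≤ 0) : layer k t = 0 :=
  indicator_of_notMem (fun h => (ht.trans_lt (zpow_pos two_pos _ |>.trans h.1)).false) _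

theorem layer_succ_eq_zero_of_two_zpow_neg_lt {n k : ℕ} (hnk : n ≤ k) {t : ℝ}
    (ht : (2:ℝ) ^ (-(n:ℤ)) < t) : layer (k + 1) t = 0 := by
  refine indicator_of_notMem (fun h => (ht.trans_le h.2).not_ge ?_) _
  exact zpow_le_zpow_right₀ one_le_two (by push_cast; omega)

theorem layer_succ_eq_zero_of_notMem_Ioc (k : ℕ) {t : ℝ} (ht : t ∉ Ioc 0 1) :
    layer (k + 1) t = 0 := by
  rcases not_and_or.mp ht with h | h
  · exact layer_eq_zero_of_nonpos _ (not_lt.mp h)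
  · exact layer_succ_eq_zero_of_two_zpow_neg_lt (n := 0) k.zero_le (by simpa using h)

theorem summable_layer_succ (t : ℝ) : Summable (fun k : ℕ => layer (k + 1) t) := by
  rcases le_or_gt t 0 with h | h
  · simp only [layer_eq_zero_of_nonpos _ h, summable_zero]
  · obtain ⟨n, hn⟩ := exists_two_zpow_neg_lt h
    exact summable_of_ne_finset_zero (s := Finset.range n)
      fun k hk => layer_succ_eq_zero_of_two_zpow_neg_lt (by simpa using hk) hn

theorem sum_Icc_layer_eq_sum_range (n : ℕ) (t : ℝ) :
    ∑ k ∈ Finset.Icc 1 n, layer k t = ∑ k ∈ Finset.range n, layer (k + 1) t := by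
  rw [Finset.range_eq_Ico, Finset.sum_Ico_add' (fun k => layer k t), zero_add,
    Finset.Ico_add_one_right_eq_Icc]

theorem sum_Icc_layer_eq_tsum {n : ℕ} {t : ℝ} (ht : (2:ℝ) ^ (-(n:ℤ)) < t) :
    ∑ k ∈ Finset.Icc 1 n, layer k t = ∑' k : ℕ, layer (k + 1) t := by
  rw [sum_Icc_layer_eq_sum_range, tsum_eq_sum (s := Finset.range n)
    fun k hk => layer_succ_eq_zero_of_two_zpow_neg_lt (by simpa using hk) ht]

theorem sum_Icc_layer_le_tsum (n : ℕ) (t : ℝ) :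
    ∑ k ∈ Finset.Icc 1 n, layer k t ≤ ∑' k : ℕ, layer (k + 1) t := by
  rw [sum_Icc_layer_eq_sum_range]
  exact (summable_layer_succ t).sum_le_tsum _ fun k _ => layer_nonneg _ _

theorem tsum_layer_succ_eq_zero_of_notMem_Ioc {t : ℝ} (ht : t ∉ Ioc 0 1) :
    ∑' k : ℕ, layer (k + 1) t = 0 := by
  simp only [layer_succ_eq_zero_of_notMem_Ioc _ ht, tsum_zero]

theorem integrable_layer (k : ℕ) : Integrable (layer k) (volume.restrict (Ioi 0)) := by
  refine (integrable_indicator_iff measurableSet_Ioc).mpr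
    ((integrableOn_const_iff (by simp)).mpr (Or.inr ?_))
  refine (Measure.restrict_apply_le _ _).trans_lt ?_
  simp

theorem integral_layer (k : ℕ) : ∫ t, layer k t ∂(volume.restrict (Ioi 0)) = 1 := by
  have hpos : (0:ℝ) < 2 ^ (-(k:ℤ)) := by positivity
  have hlen : (2:ℝ) ^ (1 - (k:ℤ)) - 2 ^ (-(k:ℤ)) = 2 ^ (-(k:ℤ)) := by
    rw [sub_eq_add_neg (1:ℤ), zpow_add₀ two_ne_zero, zpow_one]; ring
  have hsub : Ioc ((2:ℝ) ^ (-(k:ℤ))) (2 ^ (1 - (k:ℤ))) ⊆ Ioi 0 :=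
    fun _ hx => hpos.trans hx.1
  rw [layer, integral_indicator_const _ measurableSet_Ioc, measureReal_def,
    Measure.restrict_eq_self _ hsub, Real.volume_Ioc, hlen,
    ENNReal.toReal_ofReal hpos.le, smul_eq_mul, ← zpow_natCast, ← zpow_add₀ two_ne_zero,
    neg_add_cancel, zpow_zero]

theorem integrable_sum_layer (n : ℕ) :
    Integrable (fun t => ∑ k ∈ Finset.Icc 1 n, layer k t) (volume.restrict (Ioi 0)) :=
  integrable_finsetSum _ fun k _ => integrable_layer k

theorem integral_sum_layer (n : ℕ) :
    ∫ t, ∑ k ∈ Finset.Icc 1 n, layer k t ∂(volume.restrict (Ioi 0)) = n := by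
  simp [integral_finsetSum _ fun k _ => integrable_layer k, integral_layer]

theorem tendstoUniformlyOn_sum_layer (n : ℕ) :
    TendstoUniformlyOn (fun m t => ∑ k ∈ Finset.Icc 1 m, layer k t)
      (fun t => ∑' k : ℕ, layer (k + 1) t) atTop (Ioi ((2:ℝ) ^ (-(n:ℤ)))) := by
  refine tendstoUniformlyOn_of_eventually_eqOn ?_
  filter_upwards [eventually_ge_atTop n] with m hm t ht
  exact sum_Icc_layer_eq_tsum <| (zpow_le_zpow_right₀ one_le_two (by omega)).trans_lt ht

theorem volume_restrict_setOf_lt_tsum_layer_lt_top {l : ℝ} (hl : 0 < l) :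
    volume.restrict (Ioi 0) {t | l < ∑' k : ℕ, layer (k + 1) t} < ⊤ := by
  have hsub : {t | l < ∑' k : ℕ, layer (k + 1) t} ⊆ Ioc 0 1 := fun t ht => by
    by_contra h
    exact (hl.trans (ht.trans_eq (tsum_layer_succ_eq_zero_of_notMem_Ioc h))).false
  calc volume.restrict (Ioi 0) {t | l < ∑' k : ℕ, layer (k + 1) t}
      ≤ volume (Ioc (0:ℝ) 1) := (Measure.restrict_apply_le _ _).trans (measure_mono hsub)
    _ < ⊤ := by simp

theorem not_integrable_tsum_layer :
    ¬ Integrable (fun t => ∑' k : ℕ, layer (k + 1) t) (volume.restrict (Ioi 0)) :=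
  not_integrable_of_tendsto_integral_of_le integrable_sum_layer
    (fun n => ae_of_all _ (sum_Icc_layer_le_tsum n))
    (by simpa only [integral_sum_layer] using tendsto_natCast_atTop_atTop)

/-- The partial sums `f_n = Σ_{k=1}^n 2^k χ_{(2^{-k},2^{-k+1}]}` are integrable on `(0,∞)`,
converge almost uniformly to `f = Σ_{k=1}^∞ 2^k χ_{(2^{-k},2^{-k+1}]}`, the limit `f`
has finite distribution function at every positive level (so `f ∈ R₀`), yet `f` is not
integrable.  Hence `L¹` is not complete for almost uniform convergence. -/
theorem L1_not_au_complete :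
    (∀ n : ℕ, Integrable (fun t => ∑ k ∈ Finset.Icc 1 n, layer k t)
      (volume.restrict (Set.Ioi (0:ℝ)))) ∧
    (∀ ε : ℝ, 0 < ε → ∃ E : Set ℝ, MeasurableSet E ∧
      (volume.restrict (Set.Ioi (0:ℝ))) Eᶜ ≤ ENNReal.ofReal ε ∧
      TendstoUniformlyOn (fun n t => ∑ k ∈ Finset.Icc 1 n, layer k t)
        (fun t => ∑' k : ℕ, layer (k + 1) t) atTop E) ∧
    (∀ l : ℝ, 0 < l →
      (volume.restrict (Set.Ioi (0:ℝ))) {t | l < ∑' k : ℕ, layer (k + 1) t} < ⊤) ∧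
    ¬ Integrable (fun t => ∑' k : ℕ, layer (k + 1) t)
        (volume.restrict (Set.Ioi (0:ℝ))) := by
  refine ⟨integrable_sum_layer, fun ε hε => ?_,
    fun _ => volume_restrict_setOf_lt_tsum_layer_lt_top, not_integrable_tsum_layer⟩
  obtain ⟨n, hn⟩ := exists_two_zpow_neg_lt hε
  refine ⟨_, measurableSet_Ioi, ?_, tendstoUniformlyOn_sum_layer n⟩
  rw [volume_restrict_Ioi_compl_Ioi]
  exact ENNReal.ofReal_le_ofReal hn.le
end

section
/- Let (Ω, μ) be a measure space and let {f_n} be a sequence of measurable functions converging in measure to f (on sets of finite measure, or globally: for every δ > 0, μ{|f_n − f| > δ} → 0). Then for every t > 0 which is a point of continuity of μ_·(f), μ_t(f_n) → μ_t(f); in particular μ_t(f_n) → μ_t(f) for almost every t ∈ (0, ∞) with respect to Lebesgue measure. -/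
/-!
If `fₙ → f` in measure, the distribution function of `fₙ` is controlled by that of `f` up to a
shift: `μ{l + δ < |fₙ|} ≤ μ{l < |f|} + μ{δ ≤ |fₙ - f|}`, and symmetrically. For `n` large the
error term is below any `r > 0`, so `μ_{t}(fₙ) ≤ μ_{t-r}(f) + δ` and `μ_{t+r}(f) ≤ μ_t(fₙ) + δ`;
continuity of `μ_·(f)` at `t` squeezes `μ_t(fₙ)`. The rearrangement of a measurable function is
antitone on `(0, ∞)`, hence continuous off a countable set.
-/

open MeasureTheory Filter

open Topology Set

section

variable {Ω : Type*} [MeasurableSpace Ω] {μ : Measure Ω} {g h : Ω → ℝ} {s t : ℝ}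

def rearrangementSet (μ : Measure Ω) (g : Ω → ℝ) (t : ℝ) : Set ℝ :=
  {l : ℝ | 0 < l ∧ μ {x | l < |g x|} ≤ ENNReal.ofReal t}

lemma rearrangement_eq_sInf : rearrangement μ g t = sInf (rearrangementSet μ g t) := rfl

lemma bddBelow_rearrangementSet : BddBelow (rearrangementSet μ g t) :=
  ⟨0, fun _ hl => hl.1.le⟩

lemma rearrangement_eq_zero_of_rearrangementSet_eq_empty (h : rearrangementSet μ g t = ∅) :
    rearrangement μ g t = 0 := by
  rw [rearrangement_eq_sInf, h, Real.sInf_empty]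

lemma rearrangementSet_mono (hst : s ≤ t) : rearrangementSet μ g s ⊆ rearrangementSet μ g t :=
  fun _ hl => ⟨hl.1, hl.2.trans (ENNReal.ofReal_le_ofReal hst)⟩

lemma measure_setOf_add_lt_abs_le (l δ : ℝ) :
    μ {x | l + δ < |h x|} ≤ μ {x | l < |g x|} + μ {x | δ ≤ dist (h x) (g x)} := by
  refine (measure_mono fun x hx => ?_).trans (measure_union_le _ _)
  by_contra hx'
  simp only [mem_union, mem_ofPred_eq, not_or, not_lt, Real.dist_eq] at hx hx'
  linarith [abs_sub_abs_le_abs_sub (h x) (g x)]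

lemma add_mem_rearrangementSet {l δ r : ℝ} (hl : l ∈ rearrangementSet μ g s) (hδ : 0 ≤ δ)
    (hs : 0 ≤ s) (hr : 0 ≤ r) (hgh : μ {x | δ ≤ dist (h x) (g x)} ≤ ENNReal.ofReal r) :
    l + δ ∈ rearrangementSet μ h (s + r) := by
  refine ⟨by linarith [hl.1], ?_⟩
  calc μ {x | l + δ < |h x|}
      ≤ μ {x | l < |g x|} + μ {x | δ ≤ dist (h x) (g x)} := measure_setOf_add_lt_abs_le l δ
    _ ≤ ENNReal.ofReal s + ENNReal.ofReal r := add_le_add hl.2 hgh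
    _ = ENNReal.ofReal (s + r) := (ENNReal.ofReal_add hs hr).symm

lemma rearrangementSet_add_nonempty {δ r : ℝ} (hne : (rearrangementSet μ g s).Nonempty)
    (hδ : 0 ≤ δ) (hs : 0 ≤ s) (hr : 0 ≤ r)
    (hgh : μ {x | δ ≤ dist (h x) (g x)} ≤ ENNReal.ofReal r) :
    (rearrangementSet μ h (s + r)).Nonempty :=
  let ⟨_, hl⟩ := hne
  ⟨_, add_mem_rearrangementSet hl hδ hs hr hgh⟩

lemma rearrangement_add_le_s10 {δ r : ℝ} (hne : (rearrangementSet μ g s).Nonempty) (hδ : 0 ≤ δ)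
    (hs : 0 ≤ s) (hr : 0 ≤ r) (hgh : μ {x | δ ≤ dist (h x) (g x)} ≤ ENNReal.ofReal r) :
    rearrangement μ h (s + r) ≤ rearrangement μ g s + δ := by
  rw [← sub_le_iff_le_add]
  exact le_csInf hne fun l hl => sub_le_iff_le_add.2 <|
    csInf_le bddBelow_rearrangementSet (add_mem_rearrangementSet hl hδ hs hr hgh)

lemma tendsto_measure_setOf_lt_abs (hg : AEMeasurable g μ) {l : ℝ}
    (hl : μ {x | l < |g x|} ≠ ⊤) :
    Tendsto (fun c : ℝ => μ {x | c < |g x|}) atTop (𝓝 0) := by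
  have hanti : Antitone fun c : ℝ => {x | c < |g x|} :=
    fun _ _ hcd _ hx => lt_of_le_of_lt hcd hx
  have hempty : ⋂ c : ℝ, {x | c < |g x|} = ∅ :=
    eq_empty_of_forall_notMem fun x hx => lt_irrefl _ (show |g x| < |g x| from mem_iInter.1 hx _)
  simpa [hempty, Function.comp_def] using tendsto_measure_iInter_atTop
    (fun _ => nullMeasurableSet_lt aemeasurable_const hg.abs) hanti ⟨l, hl⟩

/-- One finite tail forces the tails to tend to `0`; this is where measurability is needed. -/
lemma rearrangementSet_nonempty_of_nonempty (hg : AEMeasurable g μ)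
    (hne : (rearrangementSet μ g s).Nonempty) (ht : 0 < t) :
    (rearrangementSet μ g t).Nonempty := by
  obtain ⟨l, -, hl⟩ := hne
  have hsmall := (tendsto_measure_setOf_lt_abs hg (ne_top_of_le_ne_top ENNReal.ofReal_ne_top hl))
    |>.eventually_lt_const (ENNReal.ofReal_pos.2 ht)
  obtain ⟨c, hc, hc0⟩ := (hsmall.and (eventually_gt_atTop 0)).exists
  exact ⟨c, hc0, hc.le⟩

lemma rearrangement_antitoneOn_s10 (hg : AEMeasurable g μ) :
    AntitoneOn (rearrangement μ g) (Ioi 0) := by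
  intro s hs t _ hst
  rcases (rearrangementSet μ g s).eq_empty_or_nonempty with hempty | hne
  · have hempty' : rearrangementSet μ g t = ∅ := by
      rw [← not_nonempty_iff_eq_empty] at hempty ⊢
      exact fun hne => hempty (rearrangementSet_nonempty_of_nonempty hg hne hs)
    rw [rearrangement_eq_zero_of_rearrangementSet_eq_empty hempty,
      rearrangement_eq_zero_of_rearrangementSet_eq_empty hempty']
  · exact csInf_le_csInf bddBelow_rearrangementSet hne (rearrangementSet_mono hst)

end

lemma AntitoneOn.ae_restrict_continuousAt {F : ℝ → ℝ} {s : Set ℝ} (hF : AntitoneOn F s)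
    (hs : IsOpen s) (ν : Measure ℝ) [NullSingletonClass ν] :
    ∀ᵐ t ∂ν.restrict s, ContinuousAt F t := by
  rw [ae_restrict_iff' hs.measurableSet]
  filter_upwards [hF.countable_not_continuousWithinAt.ae_notMem ν] with t ht hts
  by_contra hc
  exact ht ⟨hts, fun hw => hc (hw.continuousAt (hs.mem_nhds hts))⟩

namespace MeasureTheory

variable {Ω ι E : Type*} [MeasurableSpace Ω] {μ : Measure Ω} {l : Filter ι}

lemma tendstoInMeasure_of_tendsto_measure_lt [PseudoMetricSpace E] {f : ι → Ω → E} {g : Ω → E}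
    (h : ∀ δ : ℝ, 0 < δ → Tendsto (fun i => μ {x | δ < dist (f i x) (g x)}) l (𝓝 0)) :
    TendstoInMeasure μ f l g :=
  tendstoInMeasure_iff_dist.2 fun ε hε =>
    tendsto_of_tendsto_of_tendsto_of_le_of_le tendsto_const_nhds (h (ε / 2) (half_pos hε))
      (fun _ => zero_le) fun _ => measure_mono fun _ hx => (half_lt_self hε).trans_le hx

lemma TendstoInMeasure.eventually_measure_le [PseudoMetricSpace E] {f : ι → Ω → E} {g : Ω → E}
    (hfg : TendstoInMeasure μ f l g) {δ r : ℝ} (hδ : 0 < δ) (hr : 0 < r) :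
    ∀ᶠ i in l, μ {x | δ ≤ dist (f i x) (g x)} ≤ ENNReal.ofReal r ∧
      μ {x | δ ≤ dist (g x) (f i x)} ≤ ENNReal.ofReal r := by
  simp only [dist_comm (g _), and_self]
  exact (tendstoInMeasure_iff_dist.1 hfg δ hδ).eventually
    (eventually_le_nhds (ENNReal.ofReal_pos.2 hr))

variable {f : ι → Ω → ℝ} {g : Ω → ℝ} {s t u b : ℝ}

lemma TendstoInMeasure.eventually_rearrangementSet_nonempty (hfg : TendstoInMeasure μ f l g)
    (hs : 0 ≤ s) (hst : s < t) (hne : (rearrangementSet μ g s).Nonempty) :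
    ∀ᶠ i in l, (rearrangementSet μ (f i) t).Nonempty := by
  filter_upwards [hfg.eventually_measure_le one_pos (sub_pos.2 hst)] with i hi
  simpa using rearrangementSet_add_nonempty hne zero_le_one hs (sub_pos.2 hst).le hi.1

lemma TendstoInMeasure.eventually_rearrangement_lt (hfg : TendstoInMeasure μ f l g)
    (hs : 0 ≤ s) (hst : s < t) (hne : (rearrangementSet μ g s).Nonempty)
    (hb : rearrangement μ g s < b) : ∀ᶠ i in l, rearrangement μ (f i) t < b := by
  have hδ : 0 < (b - rearrangement μ g s) / 2 := by linarith
  filter_upwards [hfg.eventually_measure_le hδ (sub_pos.2 hst)] with i hi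
  have := rearrangement_add_le_s10 hne hδ.le hs (sub_pos.2 hst).le hi.1
  rw [add_sub_cancel] at this
  linarith

lemma TendstoInMeasure.eventually_lt_rearrangement (hfg : TendstoInMeasure μ f l g)
    (ht : 0 ≤ t) (htu : t < u) (hne : ∀ᶠ i in l, (rearrangementSet μ (f i) t).Nonempty)
    (hb : b < rearrangement μ g u) : ∀ᶠ i in l, b < rearrangement μ (f i) t := by
  have hδ : 0 < (rearrangement μ g u - b) / 2 := by linarith
  filter_upwards [hne, hfg.eventually_measure_le hδ (sub_pos.2 htu)] with i hnei hi
  have := rearrangement_add_le_s10 hnei hδ.le ht (sub_pos.2 htu).le hi.2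
  rw [add_sub_cancel] at this
  linarith

/-- When every tail of `g` is infinite, eventually every tail of `f i` is infinite as well, and
both rearrangements are the junk value `sInf ∅ = 0`. -/
lemma TendstoInMeasure.tendsto_rearrangement_of_eq_empty (hg : AEMeasurable g μ)
    (hfg : TendstoInMeasure μ f l g) (ht : 0 < t) (hempty : rearrangementSet μ g t = ∅) :
    Tendsto (fun i => rearrangement μ (f i) t) l (𝓝 (rearrangement μ g t)) := by
  have hempty_f : ∀ᶠ i in l, rearrangementSet μ (f i) t = ∅ := by
    filter_upwards [hfg.eventually_measure_le one_pos one_pos] with i hi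
    rw [← not_nonempty_iff_eq_empty] at hempty ⊢
    exact fun hne => hempty <| rearrangementSet_nonempty_of_nonempty hg
      (rearrangementSet_add_nonempty hne zero_le_one ht.le zero_le_one hi.2) ht
  rw [rearrangement_eq_zero_of_rearrangementSet_eq_empty hempty]
  exact tendsto_const_nhds.congr'
    (hempty_f.mono fun i hi => (rearrangement_eq_zero_of_rearrangementSet_eq_empty hi).symm)

theorem TendstoInMeasure.tendsto_rearrangement (hg : AEMeasurable g μ)
    (hfg : TendstoInMeasure μ f l g) (ht : 0 < t) (hcont : ContinuousAt (rearrangement μ g) t) :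
    Tendsto (fun i => rearrangement μ (f i) t) l (𝓝 (rearrangement μ g t)) := by
  rcases (rearrangementSet μ g t).eq_empty_or_nonempty with hempty | hne
  · exact hfg.tendsto_rearrangement_of_eq_empty hg ht hempty
  have hne' : ∀ s, 0 < s → (rearrangementSet μ g s).Nonempty :=
    fun _ hs => rearrangementSet_nonempty_of_nonempty hg hne hs
  refine tendsto_order.2 ⟨fun b hb => ?_, fun b hb => ?_⟩
  · obtain ⟨u, htu, hbu⟩ := (hcont.eventually (lt_mem_nhds hb)).exists_gt
    exact hfg.eventually_lt_rearrangement ht.le htu (hfg.eventually_rearrangementSet_nonempty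
      (half_pos ht).le (half_lt_self ht) (hne' _ (half_pos ht))) hbu
  · obtain ⟨s, hst, hs, hsb⟩ :=
      ((eventually_gt_nhds ht).and (hcont.eventually (gt_mem_nhds hb))).exists_lt
    exact hfg.eventually_rearrangement_lt hs.le hst (hne' s hs) hsb

end MeasureTheory

theorem rearrangement_tendsto_of_tendstoInMeasure_general
    {Ω : Type*} [MeasurableSpace Ω] (μ : Measure Ω)
    (f : ℕ → Ω → ℝ) (fhat : Ω → ℝ)
    (hmeashat : Measurable fhat)
    (hmeasconv : ∀ δ : ℝ, 0 < δ →
      Tendsto (fun n => μ {x | δ < |f n x - fhat x|}) atTop (nhds 0)) :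
    (∀ t : ℝ, 0 < t → ContinuousAt (rearrangement μ fhat) t →
      Tendsto (fun n => rearrangement μ (f n) t) atTop (nhds (rearrangement μ fhat t))) ∧
    (∀ᵐ t ∂(volume.restrict (Set.Ioi (0:ℝ))),
      Tendsto (fun n => rearrangement μ (f n) t) atTop (nhds (rearrangement μ fhat t))) := by
  have hg : AEMeasurable fhat μ := hmeashat.aemeasurable
  have hfg : TendstoInMeasure μ f atTop fhat :=
    tendstoInMeasure_of_tendsto_measure_lt (by simpa only [Real.dist_eq] using hmeasconv)
  have hconv := fun t ht => hfg.tendsto_rearrangement hg (t := t) ht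
  refine ⟨hconv, ?_⟩
  filter_upwards [(rearrangement_antitoneOn_s10 hg).ae_restrict_continuousAt isOpen_Ioi volume,
    ae_restrict_mem measurableSet_Ioi] with t hcont ht using hconv t ht hcont

/-- If `f n → f` in measure, then `μ_t(f n) → μ_t(f)` at every continuity point `t > 0`
of `t ↦ μ_t(f)`; in particular for Lebesgue-almost every `t ∈ (0,∞)`. -/
theorem rearrangement_tendsto_of_tendstoInMeasure
    {Ω : Type*} [MeasurableSpace Ω] (μ : Measure Ω)
    (f : ℕ → Ω → ℝ) (fhat : Ω → ℝ)
    (hmeas : ∀ n, Measurable (f n)) (hmeashat : Measurable fhat)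
    (hmeasconv : ∀ δ : ℝ, 0 < δ →
      Tendsto (fun n => μ {x | δ < |f n x - fhat x|}) atTop (nhds 0)) :
    (∀ t : ℝ, 0 < t → ContinuousAt (rearrangement μ fhat) t →
      Tendsto (fun n => rearrangement μ (f n) t) atTop (nhds (rearrangement μ fhat t))) ∧
    (∀ᵐ t ∂(volume.restrict (Set.Ioi (0:ℝ))),
      Tendsto (fun n => rearrangement μ (f n) t) atTop (nhds (rearrangement μ fhat t))) :=
  rearrangement_tendsto_of_tendstoInMeasure_general μ f fhat hmeashat hmeasconv
end
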